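/- Let 0 ≤ α < 1/2, θ₀ ∈ ℝ, and let X₁,…,Xₙ be i.i.d. with law P_{α,θ₀} = (1−α)·𝒰([θ₀,θ₀+1]) + α·𝒰([100+θ₀,101+θ₀]), where 𝒰([a,b]) is the uniform law on [a,b]. Let θ̂ₙ be any random variable satisfying Σ_{i=1}^n 1_{[θ̂ₙ,θ̂ₙ+1]}(X_i) = sup_{θ∈ℝ} Σ_{i=1}^n 1_{[θ,θ+1]}(X_i). Then for every c with 0 < c < n, P_{α,θ₀}[|θ̂ₙ − θ₀| > c/n] ≤ exp[−n(1−2α)²/2] + 2·exp[−(1−α)c]. In particular this ρ-estimator of θ₀ converges at rate 1/n even though the uniform model {𝒰([θ,θ+1]), θ ∈ ℝ} is misspecified when α > 0. -/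

import Mathlib

/-!
Put `t = c / n` and `I = [θ₀, θ₀ + 1]`. Almost surely every observation lies in
`I ∪ [θ₀ + 100, θ₀ + 101]`, and the window `[θ̂, θ̂ + 1]` catches at least as many observations
as `I`. If `θ̂ > θ₀ + t`, either the window misses `I`, and then at least half of the sample lies
outside `I`, or it meets the support only inside `(θ₀ + t, θ₀ + 1]`, and then no observation lies
in `[θ₀, θ₀ + t)`. Symmetrically, `θ̂ < θ₀ - t` leaves `(θ₀ + 1 - t, θ₀ + 1]` empty.
Hoeffding's inequality bounds the first event by `exp (-n (1 - 2α)² / 2)`, since each observation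
falls outside `I` with probability `α`; each empty strip has probability
`(1 - (1 - α) t)ⁿ ≤ exp (-(1 - α) n t) = exp (-(1 - α) c)`.
-/

open MeasureTheory ENNReal

/-- The contaminated uniform law
`P_{α,θ} = (1−α)·𝒰([θ,θ+1]) + α·𝒰([100+θ,101+θ])`; since both intervals have length one,
each uniform law is the restriction of Lebesgue measure to the interval. -/
noncomputable def mixUnif (α θ : ℝ) : Measure ℝ :=
  ENNReal.ofReal (1 - α) • volume.restrict (Set.Icc θ (θ + 1))
    + ENNReal.ofReal α • volume.restrict (Set.Icc (100 + θ) (101 + θ))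

open Set Real

section MixUnif

variable {α θ : ℝ} {A : Set ℝ}

instance : IsFiniteMeasure (mixUnif α θ) :=
  ⟨by simp [mixUnif, ENNReal.mul_lt_top, ENNReal.add_lt_top]⟩

lemma mixUnif_apply_of_subset (hA : A ⊆ Icc θ (θ + 1)) :
    mixUnif α θ A = ENNReal.ofReal (1 - α) * volume A := by
  have hfar : A ∩ Icc (100 + θ) (101 + θ) = ∅ :=
    subset_empty_iff.mp fun y hy => by linarith [(hA hy.1).2, hy.2.1]
  simp [mixUnif, Measure.restrict_apply' measurableSet_Icc, inter_eq_left.mpr hA, hfar]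

lemma mixUnif_real_of_subset (hα : α ≤ 1) (hA : A ⊆ Icc θ (θ + 1)) :
    (mixUnif α θ).real A = (1 - α) * volume.real A := by
  simp [measureReal_def, mixUnif_apply_of_subset hA, ENNReal.toReal_ofReal (sub_nonneg.mpr hα)]

lemma isProbabilityMeasure_mixUnif (hα₀ : 0 ≤ α) (hα₁ : α ≤ 1) :
    IsProbabilityMeasure (mixUnif α θ) := by
  constructor
  rw [mixUnif, Measure.add_apply]
  simp only [Measure.smul_apply, Measure.restrict_apply MeasurableSet.univ, univ_inter,
    Real.volume_Icc, smul_eq_mul]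
  rw [show θ + 1 - θ = 1 by ring, show 101 + θ - (100 + θ) = 1 by ring, ENNReal.ofReal_one,
    mul_one, mul_one, ← ENNReal.ofReal_add (by linarith) hα₀]
  simp

lemma mixUnif_real_Icc_compl (hα₀ : 0 ≤ α) (hα₁ : α ≤ 1) :
    (mixUnif α θ).real (Icc θ (θ + 1))ᶜ = α := by
  have := isProbabilityMeasure_mixUnif (θ := θ) hα₀ hα₁
  rw [probReal_compl_eq_one_sub measurableSet_Icc, mixUnif_real_of_subset hα₁ subset_rfl,
    Real.volume_real_Icc_of_le (by linarith)]
  ring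

lemma mixUnif_real_Ico {t : ℝ} (hα : α ≤ 1) (ht₀ : 0 ≤ t) (ht₁ : t ≤ 1) :
    (mixUnif α θ).real (Ico θ (θ + t)) = (1 - α) * t := by
  rw [mixUnif_real_of_subset hα (Ico_subset_Icc_self.trans (Icc_subset_Icc_right (by linarith))),
    Real.volume_real_Ico_of_le (by linarith), add_sub_cancel_left]

lemma mixUnif_real_Ioc {t : ℝ} (hα : α ≤ 1) (ht₀ : 0 ≤ t) (ht₁ : t ≤ 1) :
    (mixUnif α θ).real (Ioc (θ + 1 - t) (θ + 1)) = (1 - α) * t := by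
  rw [mixUnif_real_of_subset hα (Ioc_subset_Icc_self.trans (Icc_subset_Icc_left (by linarith))),
    Real.volume_real_Ioc_of_le (by linarith), _root_.sub_sub_cancel]

lemma ae_mixUnif_mem : ∀ᵐ y ∂mixUnif α θ, y ∈ Icc θ (θ + 1) ∪ Icc (100 + θ) (101 + θ) := by
  rw [mixUnif, ae_add_measure_iff]
  exact ⟨Measure.ae_smul_measure ((ae_restrict_mem measurableSet_Icc).mono fun _ => Or.inl) _,
    Measure.ae_smul_measure ((ae_restrict_mem measurableSet_Icc).mono fun _ => Or.inr) _⟩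

end MixUnif

section EmpCount

variable {α ι : Type*} [Fintype ι]

/-- Valued in `ℝ` so that it is literally the ρ-estimator's criterion `∑ i, 1_B (x i)`. -/
noncomputable def empCount (x : ι → α) (B : Set α) : ℝ := ∑ i, B.indicator 1 (x i)

variable {x : ι → α} {A B C : Set α}

lemma empCount_le_card : empCount x B ≤ Fintype.card ι := by
  calc empCount x B ≤ ∑ _i : ι, (1 : ℝ) :=
        Finset.sum_le_sum fun _ _ => indicator_le_self' (fun _ _ => zero_le_one) _
    _ = Fintype.card ι := by simp

lemma one_le_empCount (i : ι) (hi : x i ∈ B) : 1 ≤ empCount x B := by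
  calc (1 : ℝ) = B.indicator 1 (x i) := (indicator_of_mem hi (1 : α → ℝ)).symm
    _ ≤ empCount x B :=
      Finset.single_le_sum (fun _ _ => indicator_nonneg (fun _ _ => zero_le_one) _)
        (Finset.mem_univ i)

lemma empCount_le_iSup {β : Type*} (f : β → Set α) (b : β) :
    empCount x (f b) ≤ ⨆ b, empCount x (f b) :=
  le_ciSup (f := fun b => empCount x (f b))
    ⟨Fintype.card ι, forall_mem_range.mpr fun _ => empCount_le_card⟩ b

lemma empCount_mono (h : ∀ i, x i ∈ B → x i ∈ C) : empCount x B ≤ empCount x C :=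
  Finset.sum_le_sum fun i _ => by
    by_cases hi : x i ∈ B
    · simp [indicator_of_mem hi, indicator_of_mem (h i hi)]
    · simp [indicator_of_notMem hi, indicator_nonneg]

lemma empCount_union (hAB : Disjoint A B) :
    empCount x (A ∪ B) = empCount x A + empCount x B := by
  simp only [empCount, indicator_union_of_disjoint hAB, Finset.sum_add_distrib]

lemma empCount_add_empCount_compl : empCount x B + empCount x Bᶜ = Fintype.card ι := by
  simp [empCount, ← Finset.sum_add_distrib, indicator_self_add_compl_apply]

lemma notMem_of_empCount_le (hA : A ⊆ B) (hC : C ⊆ B) (hAC : Disjoint A C)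
    (h : empCount x B ≤ empCount x C) (i : ι) : x i ∉ A := by
  intro hi
  have hunion := empCount_mono (x := x) fun _ hj => union_subset hA hC hj
  rw [empCount_union hAC] at hunion
  linarith [one_le_empCount i hi]

end EmpCount

section Window

variable {ι : Type*} [Fintype ι] {x : ι → ℝ} {θ a t : ℝ}

lemma far_window_cases (ht₀ : 0 ≤ t) (ht₁ : t ≤ 1)
    (hx : ∀ i, x i ∈ Icc θ (θ + 1) ∪ Icc (100 + θ) (101 + θ))
    (hmax : empCount x (Icc θ (θ + 1)) ≤ empCount x (Icc a (a + 1)))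
    (hfar : t < |a - θ|) :
    (Fintype.card ι : ℝ) / 2 ≤ empCount x (Icc θ (θ + 1))ᶜ ∨
      (∀ i, x i ∉ Ico θ (θ + t)) ∨ (∀ i, x i ∉ Ioc (θ + 1 - t) (θ + 1)) := by
  rcases lt_abs.mp hfar with hright | hleft
  · rcases lt_or_ge a (θ + 99) with hnear | hbeyond
    · refine Or.inr (Or.inl (notMem_of_empCount_le (C := Ioc (θ + t) (θ + 1))
        ?_ ?_ ?_ (hmax.trans (empCount_mono fun i hi => ?_))))
      · exact fun y hy => ⟨hy.1, by linarith [hy.2]⟩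
      · exact fun y hy => ⟨by linarith [hy.1], hy.2⟩
      · exact Set.disjoint_left.mpr fun y hy hy' => by linarith [hy.2, hy'.1]
      · rcases hx i with h | h <;> simp only [mem_Icc, mem_Ioc] at h hi ⊢ <;>
          constructor <;> linarith
    · left
      have hwindow := empCount_mono (x := x) (B := Icc a (a + 1)) (C := (Icc θ (θ + 1))ᶜ)
        fun i hi h => by linarith [hi.1, h.2]
      linarith [empCount_add_empCount_compl (x := x) (B := Icc θ (θ + 1))]
  · refine Or.inr (Or.inr (notMem_of_empCount_le (C := Icc θ (θ + 1 - t))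
      ?_ ?_ ?_ (hmax.trans (empCount_mono fun i hi => ?_))))
    · exact fun y hy => ⟨by linarith [hy.1], hy.2⟩
    · exact fun y hy => ⟨hy.1, by linarith [hy.2]⟩
    · exact Set.disjoint_left.mpr fun y hy hy' => by linarith [hy.1, hy'.2]
    · rcases hx i with h | h <;> simp only [mem_Icc] at h hi ⊢ <;>
        constructor <;> linarith

end Window

section Product

open ProbabilityTheory

variable {Ω ι : Type*} [MeasurableSpace Ω] [Fintype ι] {μ : Measure Ω} [IsProbabilityMeasure μ]
  {A : Set Ω}

lemma measure_pi_compl_le_exp (hA : MeasurableSet A) :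
    Measure.pi (fun _ : ι => μ) (Set.pi univ fun _ => Aᶜ) ≤
      ENNReal.ofReal (exp (-(Fintype.card ι * μ.real A))) := by
  have hcompl : μ Aᶜ ≤ ENNReal.ofReal (exp (-μ.real A)) := by
    rw [← ofReal_measureReal, probReal_compl_eq_one_sub hA]
    exact ENNReal.ofReal_le_ofReal (one_sub_le_exp_neg _)
  calc Measure.pi (fun _ : ι => μ) (Set.pi univ fun _ => Aᶜ) = μ Aᶜ ^ Fintype.card ι := by
        simp [Measure.pi_pi]
    _ ≤ ENNReal.ofReal (exp (-μ.real A)) ^ Fintype.card ι := by gcongr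
    _ = ENNReal.ofReal (exp (-(Fintype.card ι * μ.real A))) := by
        rw [← ENNReal.ofReal_pow (exp_nonneg _), ← exp_nat_mul]
        ring_nf

lemma hasSubgaussianMGF_indicator_eval (hA : MeasurableSet A) (i : ι) :
    HasSubgaussianMGF (fun x : ι → Ω => A.indicator 1 (x i) - μ.real A) (1 / 4)
      (Measure.pi fun _ : ι => μ) := by
  have hmeas : Measurable (A.indicator (1 : Ω → ℝ)) := measurable_one.indicator hA
  have hmean : ∫ x, A.indicator 1 (x i) ∂(Measure.pi fun _ : ι => μ) = μ.real A := by
    rw [integral_comp_eval hmeas.aestronglyMeasurable, integral_indicator_one hA]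
  have hoeffding_lemma := hasSubgaussianMGF_of_mem_Icc (a := 0) (b := 1)
    (X := fun x : ι → Ω => A.indicator 1 (x i)) (hmeas.comp (measurable_pi_apply i)).aemeasurable
    (ae_of_all (Measure.pi fun _ : ι => μ) fun x => ⟨indicator_nonneg (fun _ _ => zero_le_one) _,
      indicator_le_self' (fun _ _ => zero_le_one) _⟩)
  rw [hmean] at hoeffding_lemma
  convert hoeffding_lemma using 1
  norm_num

lemma measure_pi_le_empCount_le_exp (hA : MeasurableSet A) {s : ℝ} (hs : μ.real A ≤ s) :
    Measure.pi (fun _ : ι => μ) {x | Fintype.card ι * s ≤ empCount x A} ≤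
      ENNReal.ofReal (exp (-(2 * Fintype.card ι * (s - μ.real A) ^ 2))) := by
  set n : ℝ := (Fintype.card ι : ℝ)
  have hindep : iIndepFun (fun i (x : ι → Ω) => A.indicator 1 (x i) - μ.real A)
      (Measure.pi fun _ : ι => μ) :=
    iIndepFun_pi (X := fun _ y => A.indicator 1 y - μ.real A)
      fun _ => ((measurable_one.indicator hA).sub_const _).aemeasurable
  have hε : 0 ≤ n * (s - μ.real A) := mul_nonneg (Nat.cast_nonneg _) (sub_nonneg.mpr hs)
  have hoeffding := HasSubgaussianMGF.measure_sum_ge_le_of_iIndepFun hindep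
    (s := Finset.univ) (fun i _ => hasSubgaussianMGF_indicator_eval hA i) hε
  have hevent : {x | n * s ≤ empCount x A} =
      {x : ι → Ω | n * (s - μ.real A) ≤ ∑ i, (A.indicator 1 (x i) - μ.real A)} := by
    ext x
    simp only [empCount, mem_ofPred_eq, Finset.sum_sub_distrib, Finset.sum_const,
      Finset.card_univ, nsmul_eq_mul]
    constructor <;> intro h <;> linarith
  have hproxy : ((∑ _i : ι, (1 / 4 : NNReal) : NNReal) : ℝ) = n / 4 := by
    simp [n]
    ring
  have hexp : -(n * (s - μ.real A)) ^ 2 / (2 * (n / 4)) = -(2 * n * (s - μ.real A) ^ 2) := by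
    rcases eq_or_ne n 0 with hn | hn
    · simp [hn]
    · field_simp
      ring
  rw [hevent, ENNReal.le_ofReal_iff_toReal_le (measure_ne_top _ _) (exp_nonneg _), ← hexp,
    ← hproxy]
  exact hoeffding

end Product

section Estimator

variable {ι : Type*} [Fintype ι] {α θ t : ℝ} {θhat : (ι → ℝ) → ℝ}

lemma far_ae_le_union (ht₀ : 0 ≤ t) (ht₁ : t ≤ 1)
    (hmax : ∀ x, empCount x (Icc θ (θ + 1)) ≤ empCount x (Icc (θhat x) (θhat x + 1))) :
    {x | t < |θhat x - θ|} ≤ᵐ[Measure.pi fun _ : ι => mixUnif α θ]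
      ({x | Fintype.card ι * (1 / 2 : ℝ) ≤ empCount x (Icc θ (θ + 1))ᶜ} ∪
        Set.pi univ (fun _ => (Ico θ (θ + t))ᶜ) ∪
          Set.pi univ (fun _ => (Ioc (θ + 1 - t) (θ + 1))ᶜ) : Set (ι → ℝ)) := by
  filter_upwards [Filter.eventually_all.mpr fun (i : ι) =>
    Measure.tendsto_eval_ae_ae (i := i) |>.eventually ae_mixUnif_mem] with x hsupp hfar
  rcases far_window_cases ht₀ ht₁ hsupp (hmax x) hfar with h | h | h
  · exact Or.inl (Or.inl (show (Fintype.card ι : ℝ) * (1 / 2) ≤ _ by linarith))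
  · exact Or.inl (Or.inr fun i _ => h i)
  · exact Or.inr fun i _ => h i

end Estimator

theorem rho_estimator_contaminated_uniform_deviation
    (α θ₀ : ℝ) (hα0 : 0 ≤ α) (hα1 : α < 1/2) (n : ℕ)
    (that : (Fin n → ℝ) → ℝ)
    (hmax : ∀ x : Fin n → ℝ,
      (∑ i, Set.indicator (Set.Icc (that x) (that x + 1)) (1 : ℝ → ℝ) (x i)) =
        ⨆ θ : ℝ, ∑ i, Set.indicator (Set.Icc θ (θ + 1)) (1 : ℝ → ℝ) (x i))
    (c : ℝ) (hc0 : 0 < c) (hcn : c < n) :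
    (Measure.pi fun _ : Fin n => mixUnif α θ₀) {x | c / n < |that x - θ₀|} ≤
      ENNReal.ofReal (Real.exp (-(n * (1 - 2*α) ^ 2) / 2)
        + 2 * Real.exp (-((1 - α) * c))) := by
  have hn : (0 : ℝ) < n := hc0.trans hcn
  have hα : α ≤ 1 := by linarith
  have : IsProbabilityMeasure (mixUnif α θ₀) := isProbabilityMeasure_mixUnif hα0 hα
  set t := c / n
  have ht₀ : 0 ≤ t := by positivity
  have ht₁ : t ≤ 1 := (div_le_one hn).mpr hcn.le
  have hcases := far_ae_le_union (α := α) ht₀ ht₁ fun x =>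
    (empCount_le_iSup (fun θ => Icc θ (θ + 1)) θ₀).trans_eq (hmax x).symm
  have hE₁ := measure_pi_le_empCount_le_exp (ι := Fin n) (μ := mixUnif α θ₀)
    measurableSet_Icc.compl (s := 1 / 2) (by rw [mixUnif_real_Icc_compl hα0 hα]; linarith)
  have hE₂ := measure_pi_compl_le_exp (ι := Fin n) (μ := mixUnif α θ₀)
    (measurableSet_Ico (a := θ₀) (b := θ₀ + t))
  have hE₃ := measure_pi_compl_le_exp (ι := Fin n) (μ := mixUnif α θ₀)
    (measurableSet_Ioc (a := θ₀ + 1 - t) (b := θ₀ + 1))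
  rw [Fintype.card_fin] at hcases
  rw [mixUnif_real_Icc_compl hα0 hα, Fintype.card_fin] at hE₁
  rw [mixUnif_real_Ico hα ht₀ ht₁, Fintype.card_fin] at hE₂
  rw [mixUnif_real_Ioc hα ht₀ ht₁, Fintype.card_fin] at hE₃
  have hcancel : (n : ℝ) * ((1 - α) * t) = (1 - α) * c := by
    simp only [t]; field_simp
  refine (measure_mono_ae hcases).trans <| (measure_union_le _ _).trans <|
    (add_le_add ((measure_union_le _ _).trans (add_le_add hE₁ hE₂)) hE₃).trans_eq ?_
  rw [hcancel, ← ENNReal.ofReal_add (exp_nonneg _) (exp_nonneg _),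
    ← ENNReal.ofReal_add (by positivity) (exp_nonneg _)]
  ring_nf
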